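/- arXiv:math/0611703 — 3 statements merged into one kernel-verified Lean document; each statement's English description precedes it below -/
import Mathlib

section
/- For every real q with 0 < q < 1, every integer k ≥ 0, and every complex number z, the k-th term of the series for A_q((1−q)z) is dominated by the k-th term of the exponential series: (1−q)^k · q^{k²} · |z|^k / (q;q)_k ≤ (q|z|)^k / k!. -/
/-!
Write `q^{k²} = ∏_{j<k} q^{2j+1}` and `(q;q)_k = ∏_{j<k} (1 - q^{j+1})`, so that both sides are
products of `k` factors, and compare them factor by factor. The `j`-th comparison amounts to
`(j+1)(1-q) q^{2j} ≤ 1 - q^{j+1} = (1-q)(1 + q + ⋯ + q^j)`, which holds because each of the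
`j+1` summands is at least `q^j ≥ q^{2j}`.
-/

/-- The finite q-Pochhammer symbol `(a;q)_n = ∏_{j=0}^{n-1} (1 - a q^j)` in `ℝ`. -/
noncomputable def qPochR (q a : ℝ) (n : ℕ) : ℝ :=
  ∏ j ∈ Finset.range n, (1 - a * q ^ j)

open Finset

lemma qPochR_self (q : ℝ) (k : ℕ) : qPochR q q k = ∏ j ∈ range k, (1 - q ^ (j + 1)) := by
  simp only [qPochR, pow_succ']

lemma sum_range_two_mul_add_one (k : ℕ) : ∑ j ∈ range k, (2 * j + 1) = k ^ 2 := by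
  induction k with
  | zero => rfl
  | succ k ih => rw [sum_range_succ, ih]; ring

lemma succ_mul_pow_le_geom_sum {q : ℝ} (hq0 : 0 ≤ q) (hq1 : q ≤ 1) (j : ℕ) :
    (j + 1) * q ^ j ≤ ∑ i ∈ range (j + 1), q ^ i := by
  calc (j + 1) * q ^ j = ∑ _i ∈ range (j + 1), q ^ j := by simp
    _ ≤ ∑ i ∈ range (j + 1), q ^ i :=
      sum_le_sum fun i hi => pow_le_pow_of_le_one hq0 hq1 (Nat.lt_succ_iff.mp (mem_range.mp hi))

lemma succ_mul_one_sub_mul_pow_le {q : ℝ} (hq0 : 0 ≤ q) (hq1 : q ≤ 1) (j : ℕ) :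
    (j + 1) * (1 - q) * q ^ j ≤ 1 - q ^ (j + 1) := by
  rw [← mul_neg_geom_sum, mul_comm _ (1 - q), mul_assoc]
  exact mul_le_mul_of_nonneg_left (succ_mul_pow_le_geom_sum hq0 hq1 j) (sub_nonneg.mpr hq1)

lemma one_sub_mul_pow_mul_div_le {q : ℝ} (hq0 : 0 ≤ q) (hq1 : q < 1) {r : ℝ} (hr : 0 ≤ r)
    (j : ℕ) : (1 - q) * q ^ (2 * j + 1) * r / (1 - q ^ (j + 1)) ≤ q * r / (j + 1) := by
  have hden : 0 < 1 - q ^ (j + 1) := sub_pos.mpr (pow_lt_one₀ hq0 hq1 (Nat.succ_ne_zero j))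
  rw [div_le_div_iff₀ hden (by positivity)]
  have hpow : q ^ (j + 1) ≤ q := pow_le_of_le_one hq0 hq1.le (Nat.succ_ne_zero j)
  have key := succ_mul_one_sub_mul_pow_le hq0 hq1.le j
  calc (1 - q) * q ^ (2 * j + 1) * r * (j + 1)
      = (j + 1) * (1 - q) * q ^ j * (q ^ (j + 1) * r) := by ring
    _ ≤ (1 - q ^ (j + 1)) * (q * r) := by gcongr
    _ = q * r * (1 - q ^ (j + 1)) := by ring

/-- For `0 < q < 1`, `k ∈ ℕ` and complex `z`, the `k`-th term of the series for
`A_q((1−q)z)` is dominated by the `k`-th term of the exponential series: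
`(1−q)^k q^{k²} |z|^k / (q;q)_k ≤ (q|z|)^k / k!`. -/
theorem term_le_exp_term (q : ℝ) (hq0 : 0 < q) (hq1 : q < 1) (k : ℕ) (z : ℂ) :
    (1 - q) ^ k * q ^ (k ^ 2) * ‖z‖ ^ k / qPochR q q k ≤
      (q * ‖z‖) ^ k / Nat.factorial k := by
  calc (1 - q) ^ k * q ^ (k ^ 2) * ‖z‖ ^ k / qPochR q q k
      = ∏ j ∈ range k, ((1 - q) * q ^ (2 * j + 1) * ‖z‖ / (1 - q ^ (j + 1))) := by
        rw [prod_div_distrib, prod_mul_distrib, prod_mul_distrib, prod_const, prod_const,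
          card_range, prod_pow_eq_pow_sum, sum_range_two_mul_add_one, qPochR_self]
    _ ≤ ∏ j ∈ range k, (q * ‖z‖ / (j + 1)) := by
        refine prod_le_prod (fun j _ => ?_) (fun j _ => ?_)
        · have hq : 0 ≤ 1 - q := sub_nonneg.mpr hq1.le
          have hden : 0 ≤ 1 - q ^ (j + 1) := sub_nonneg.mpr (pow_le_one₀ hq0.le hq1.le)
          positivity
        · exact one_sub_mul_pow_mul_div_le hq0.le hq1 (norm_nonneg z) j
    _ = (q * ‖z‖) ^ k / Nat.factorial k := by
        rw [prod_div_distrib, prod_const, card_range, ← prod_range_add_one_eq_factorial]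
        norm_cast
end

section
/- For every real q with 0 < q < 1, every integer k ≥ 0, and every nonzero complex number z, one has q^{k(k−1)} |z|^k ≤ (|z|/√q)^{1/2} · exp(−(log|z|)²/(4 log q)). -/
/-! Put `x = log ‖z‖` and `L = log q < 0`. Taking logarithms, the claim reads
`L k (k - 1) + k x ≤ x / 2 - L / 4 - x² / (4 L)`; with `s = k - 1/2` this is
`L s² + x s ≤ -x² / (4 L)`, the maximum of a concave quadratic in `s`. -/

open Real

theorem mul_sq_add_mul_le_of_neg {a : ℝ} (ha : a < 0) (b s : ℝ) :
    a * s ^ 2 + b * s ≤ -b ^ 2 / (4 * a) := by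
  rw [le_div_iff_of_neg (by linarith)]
  nlinarith [sq_nonneg (2 * a * s + b)]

theorem pow_eq_exp_mul_log {r : ℝ} (hr : 0 < r) (n : ℕ) : r ^ n = exp (n * log r) := by
  rw [← log_pow, exp_log (pow_pos hr n)]

theorem natCast_mul_sub_one (k : ℕ) : ((k * (k - 1) : ℕ) : ℝ) = k * (k - 1) := by
  cases k <;> simp

/-- For `0 < q < 1`, `k ∈ ℕ` and nonzero complex `z`,
`q^{k(k−1)} |z|^k ≤ (|z|/√q)^{1/2} · exp(−(log|z|)²/(4 log q))`. -/
theorem pow_mul_abs_pow_le (q : ℝ) (hq0 : 0 < q) (hq1 : q < 1) (k : ℕ) (z : ℂ) (hz : z ≠ 0) :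
    q ^ (k * (k - 1)) * ‖z‖ ^ k ≤
      (‖z‖ / Real.sqrt q) ^ ((1 : ℝ) / 2) *
        Real.exp (-(Real.log (‖z‖)) ^ 2 / (4 * Real.log q)) := by
  have hz' : 0 < ‖z‖ := norm_pos_iff.mpr hz
  have hL : log q < 0 := log_neg hq0 hq1
  have hroot : (‖z‖ / √q) ^ ((1 : ℝ) / 2) = exp ((log ‖z‖ - log q / 2) / 2) := by
    rw [rpow_def_of_pos (div_pos hz' (sqrt_pos.mpr hq0)), log_div hz'.ne' (sqrt_pos.mpr hq0).ne',
      log_sqrt hq0.le]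
    ring_nf
  rw [pow_eq_exp_mul_log hq0, pow_eq_exp_mul_log hz', hroot, ← exp_add, ← exp_add, exp_le_exp,
    natCast_mul_sub_one]
  have := mul_sq_add_mul_le_of_neg hL (log ‖z‖) (k - 1 / 2)
  linarith
end

section
/- Let 0 < q < 1, t > 0, n ∈ ℕ, and let u be a nonzero complex number. Then the Ismail–Masson polynomial evaluated at the scaled point sinh ξ_n = (q^{−nt}u − q^{nt}u^{−1})/2 (with e^{ξ_n} = q^{−nt}u) satisfies |h_n(sinh ξ_n | q)| = |Σ_{k=0}^n [n;k]_q q^{k(k−n)} (−1)^k (q^{−nt}u)^{n−2k}| ≤ |u|^n q^{−n²t} A_q(−q^{n(2t−1)} |u|^{−2}). -/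
/-- The finite q-Pochhammer symbol `(a;q)_n = ∏_{j=0}^{n-1} (1 - a q^j)` in `ℂ`,
with real base `q`. -/
noncomputable def qPochC (q : ℝ) (a : ℂ) (n : ℕ) : ℂ :=
  ∏ j ∈ Finset.range n, (1 - a * (q : ℂ) ^ j)

/-- The q-binomial coefficient `[n; k]_q = (q;q)_n / ((q;q)_k (q;q)_{n−k})` in `ℂ`. -/
noncomputable def qBinomC (q : ℝ) (n k : ℕ) : ℂ :=
  qPochC q q n / (qPochC q q k * qPochC q q (n - k))

/-- The Ramanujan function restricted to real arguments:
`A_q(x) = Σ_{k=0}^∞ q^{k²} (−x)^k / (q;q)_k`. -/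
noncomputable def ramanujanAqR (q x : ℝ) : ℝ :=
  ∑' k : ℕ, q ^ (k ^ 2) * (-x) ^ k / qPochR q q k

/-! Each term of the sum has modulus `‖[n;k]_q‖ q^{k(k-n)} (q^{-nt}|u|)^{n-2k}`, which equals
`|u|^n q^{-n²t} ‖[n;k]_q‖ q^{k²} c^k` with `c = q^{n(2t-1)}/|u|²`. Since `(q;q)_n ≤ (q;q)_{n-k}`,
`‖[n;k]_q‖ ≤ 1/(q;q)_k`, so by the triangle inequality the sum is at most `|u|^n q^{-n²t}` times a
partial sum of the positive series defining `A_q(-c)`. -/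

open Filter

section IsmailMasson

variable {q : ℝ}

lemma qPochR_succ (a : ℝ) (n : ℕ) : qPochR q a (n + 1) = qPochR q a n * (1 - a * q ^ n) :=
  Finset.prod_range_succ _ _

lemma one_sub_le_one_sub_mul_pow (hq0 : 0 ≤ q) (hq1 : q ≤ 1) (j : ℕ) :
    1 - q ≤ 1 - q * q ^ j := by
  nlinarith [pow_le_one₀ hq0 hq1 (n := j)]

lemma qPochR_pos (hq0 : 0 ≤ q) (hq1 : q < 1) (n : ℕ) : 0 < qPochR q q n :=
  Finset.prod_pos fun j _ => by linarith [one_sub_le_one_sub_mul_pow hq0 hq1.le j]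

lemma one_sub_pow_le_qPochR (hq0 : 0 ≤ q) (hq1 : q ≤ 1) (n : ℕ) : (1 - q) ^ n ≤ qPochR q q n := by
  calc (1 - q) ^ n = ∏ _j ∈ Finset.range n, (1 - q) := by simp
    _ ≤ qPochR q q n := Finset.prod_le_prod (fun _ _ => by linarith)
          fun j _ => one_sub_le_one_sub_mul_pow hq0 hq1 j

lemma qPochR_antitone (hq0 : 0 ≤ q) (hq1 : q < 1) : Antitone (qPochR q q) := by
  refine antitone_nat_of_succ_le fun n => ?_
  rw [qPochR_succ]
  exact mul_le_of_le_one_right (qPochR_pos hq0 hq1 n).le (sub_le_self _ (by positivity))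

lemma qPochC_ofReal (a : ℝ) (n : ℕ) : qPochC q a n = qPochR q a n := by
  simp [qPochC, qPochR]

lemma norm_qBinomC_le (hq0 : 0 ≤ q) (hq1 : q < 1) (n k : ℕ) :
    ‖qBinomC q n k‖ ≤ (qPochR q q k)⁻¹ := by
  have hpos := qPochR_pos hq0 hq1
  have hreal : qBinomC q n k = ((qPochR q q n / qPochR q q (n - k) / qPochR q q k : ℝ) : ℂ) := by
    rw [qBinomC, qPochC_ofReal, qPochC_ofReal, qPochC_ofReal]
    push_cast
    ring
  have hratio : qPochR q q n / qPochR q q (n - k) ≤ 1 :=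
    div_le_one_of_le₀ (qPochR_antitone hq0 hq1 (Nat.sub_le n k)) (hpos _).le
  have hratio_nonneg : 0 ≤ qPochR q q n / qPochR q q (n - k) :=
    div_nonneg (hpos n).le (hpos _).le
  rw [hreal, Complex.norm_real, Real.norm_of_nonneg (div_nonneg hratio_nonneg (hpos k).le),
    div_eq_mul_inv]
  exact mul_le_of_le_one_left (inv_nonneg.2 (hpos k).le) hratio

lemma summable_ramanujan_terms (hq0 : 0 ≤ q) (hq1 : q < 1) (c : ℝ) :
    Summable fun k : ℕ => q ^ (k ^ 2) * c ^ k / qPochR q q k := by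
  set r := |c| / (1 - q)
  have hsmall : ∀ᶠ k : ℕ in atTop, q ^ k * r ≤ 1 / 2 := by
    have := (tendsto_pow_atTop_nhds_zero_of_lt_one hq0 hq1).mul_const r
    rw [zero_mul] at this
    exact this.eventually_le_const (by norm_num)
  refine Summable.of_norm_bounded_eventually_nat summable_geometric_two ?_
  filter_upwards [hsmall] with k hk
  have hP := one_sub_pow_le_qPochR hq0 hq1.le k
  have h1q : 0 < (1 - q) ^ k := pow_pos (by linarith) k
  calc ‖q ^ (k ^ 2) * c ^ k / qPochR q q k‖ = q ^ (k ^ 2) * |c| ^ k / qPochR q q k := by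
        rw [Real.norm_eq_abs, abs_div, abs_mul, abs_pow, abs_pow, abs_of_nonneg hq0,
          abs_of_pos (h1q.trans_le hP)]
    _ ≤ q ^ (k ^ 2) * |c| ^ k / (1 - q) ^ k := by gcongr
    _ = (q ^ k * r) ^ k := by rw [mul_pow, ← pow_mul, div_pow, sq]; ring
    _ ≤ (1 / 2) ^ k := pow_le_pow_left₀ (by positivity) hk k

lemma sum_range_le_ramanujanAqR_neg (hq0 : 0 ≤ q) (hq1 : q < 1) {c : ℝ} (hc : 0 ≤ c) (m : ℕ) :
    ∑ k ∈ Finset.range m, q ^ (k ^ 2) * c ^ k / qPochR q q k ≤ ramanujanAqR q (-c) := by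
  have hP := qPochR_pos hq0 hq1
  simp only [ramanujanAqR, neg_neg]
  exact (summable_ramanujan_terms hq0 hq1 c).sum_le_tsum _ fun k _ => by have := hP k; positivity

lemma zpow_mul_scaled_zpow_eq {A : ℝ} (hq : 0 < q) (hA : 0 < A) (s : ℝ) (n k : ℕ) :
    q ^ ((k : ℤ) * ((k : ℤ) - (n : ℤ))) * (q ^ (-(n : ℝ) * s) * A) ^ ((n : ℤ) - 2 * (k : ℤ)) =
      A ^ n * q ^ (-((n : ℝ) ^ 2) * s) *
        (q ^ (k ^ 2) * (q ^ ((n : ℝ) * (2 * s - 1)) / A ^ 2) ^ k) := by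
  refine Real.log_injOn_pos (Set.mem_Ioi.2 (by positivity)) (Set.mem_Ioi.2 (by positivity)) ?_
  simp (disch := positivity) only [Real.log_mul, Real.log_zpow, Real.log_pow, Real.log_rpow hq,
    Real.log_div]
  push_cast
  ring

lemma norm_ismailMasson_scaled_term_le (hq0 : 0 < q) (hq1 : q < 1) (s : ℝ) (n k : ℕ)
    {u : ℂ} (hu : u ≠ 0) :
    ‖qBinomC q n k * (q : ℂ) ^ ((k : ℤ) * ((k : ℤ) - (n : ℤ))) * (-1) ^ k *
        (((q ^ (-(n : ℝ) * s) : ℝ) : ℂ) * u) ^ ((n : ℤ) - 2 * (k : ℤ))‖ ≤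
      ‖u‖ ^ n * q ^ (-((n : ℝ) ^ 2) * s) *
        (q ^ (k ^ 2) * (q ^ ((n : ℝ) * (2 * s - 1)) / ‖u‖ ^ 2) ^ k / qPochR q q k) := by
  have hnorm : ‖qBinomC q n k * (q : ℂ) ^ ((k : ℤ) * ((k : ℤ) - (n : ℤ))) * (-1) ^ k *
        (((q ^ (-(n : ℝ) * s) : ℝ) : ℂ) * u) ^ ((n : ℤ) - 2 * (k : ℤ))‖ =
      ‖qBinomC q n k‖ * (q ^ ((k : ℤ) * ((k : ℤ) - (n : ℤ))) *
        (q ^ (-(n : ℝ) * s) * ‖u‖) ^ ((n : ℤ) - 2 * (k : ℤ))) := by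
    simp only [norm_mul, norm_zpow, norm_pow, norm_neg, norm_one, one_pow, mul_one,
      Complex.norm_real, Real.norm_of_nonneg hq0.le,
      Real.norm_of_nonneg (Real.rpow_nonneg hq0.le _)]
    ring
  rw [hnorm, zpow_mul_scaled_zpow_eq hq0 (norm_pos_iff.2 hu), mul_comm ‖qBinomC q n k‖,
    mul_div_assoc', div_eq_mul_inv]
  exact mul_le_mul_of_nonneg_left (norm_qBinomC_le hq0.le hq1 n k) (by positivity)

end IsmailMasson

theorem abs_ismailMasson_scaled_le_general (q t : ℝ) (hq0 : 0 < q) (hq1 : q < 1)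
    (n : ℕ) (u : ℂ) (hu : u ≠ 0) :
    ‖∑ k ∈ Finset.range (n + 1),
        qBinomC q n k * (q : ℂ) ^ ((k : ℤ) * ((k : ℤ) - (n : ℤ))) * (-1) ^ k *
          (((q ^ (-(n : ℝ) * t) : ℝ) : ℂ) * u) ^ ((n : ℤ) - 2 * (k : ℤ))‖ ≤
      ‖u‖ ^ n * q ^ (-((n : ℝ) ^ 2) * t) *
        ramanujanAqR q (-(q ^ ((n : ℝ) * (2 * t - 1)) / ‖u‖ ^ 2)) := by
  set c := q ^ ((n : ℝ) * (2 * t - 1)) / ‖u‖ ^ 2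
  refine (norm_sum_le _ _).trans ?_
  calc _ ≤ ∑ k ∈ Finset.range (n + 1),
          ‖u‖ ^ n * q ^ (-((n : ℝ) ^ 2) * t) * (q ^ (k ^ 2) * c ^ k / qPochR q q k) :=
        Finset.sum_le_sum fun k _ => norm_ismailMasson_scaled_term_le hq0 hq1 t n k hu
    _ = ‖u‖ ^ n * q ^ (-((n : ℝ) ^ 2) * t) *
          ∑ k ∈ Finset.range (n + 1), q ^ (k ^ 2) * c ^ k / qPochR q q k :=
        (Finset.mul_sum _ _ _).symm
    _ ≤ ‖u‖ ^ n * q ^ (-((n : ℝ) ^ 2) * t) * ramanujanAqR q (-c) :=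
        mul_le_mul_of_nonneg_left
          (sum_range_le_ramanujanAqR_neg hq0.le hq1 (by positivity) _) (by positivity)

/-- For `0 < q < 1`, `t > 0`, `n ∈ ℕ` and nonzero complex `u`, the Ismail–Masson
polynomial at the scaled point `sinh ξ_n = (q^{−nt}u − q^{nt}u^{−1})/2` (with
`e^{ξ_n} = q^{−nt}u`) satisfies
`|h_n(sinh ξ_n | q)| ≤ |u|^n q^{−n²t} A_q(−q^{n(2t−1)} |u|^{−2})`. -/
theorem abs_ismailMasson_scaled_le (q t : ℝ) (hq0 : 0 < q) (hq1 : q < 1) (ht : 0 < t)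
    (n : ℕ) (u : ℂ) (hu : u ≠ 0) :
    ‖∑ k ∈ Finset.range (n + 1),
        qBinomC q n k * (q : ℂ) ^ ((k : ℤ) * ((k : ℤ) - (n : ℤ))) * (-1) ^ k *
          (((q ^ (-(n : ℝ) * t) : ℝ) : ℂ) * u) ^ ((n : ℤ) - 2 * (k : ℤ))‖ ≤
      ‖u‖ ^ n * q ^ (-((n : ℝ) ^ 2) * t) *
        ramanujanAqR q (-(q ^ ((n : ℝ) * (2 * t - 1)) / ‖u‖ ^ 2)) :=
  abs_ismailMasson_scaled_le_general q t hq0 hq1 n u hu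
end
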